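/- Let X and Y be real square-integrable random variables on a probability space with Var(X) > 0 and Var(Y) > 0, and let ρ = Cov(X,Y)/√(Var(X)·Var(Y)). Let N_h, N_l ≥ 1 be integers, let (X_i, Y_i), i = 1,…,N_h, be independent and identically distributed copies of the pair (X, Y), and let (Y'_j), j = 1,…,N_l, be independent and identically distributed copies of Y such that the collection (Y'_j)_{j=1}^{N_l} is independent of the collection (X_i, Y_i)_{i=1}^{N_h}. For α ∈ ℝ define the estimator M(α) = (1/N_h) Σ_{i=1}^{N_h} X_i − α( (1/N_h) Σ_{i=1}^{N_h} Y_i − (1/N_l) Σ_{j=1}^{N_l} Y'_j ). Then Var(M(α)) is minimized over α ∈ ℝ at α* = (Cov(X,Y)/Var(Y)) · 1/(1 + N_h/N_l), and the minimal variance equals (1/N_h)(1 − ρ²/(1 + N_h/N_l))·Var(X). -/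

import Mathlib

open MeasureTheory ProbabilityTheory
open scoped ENNReal

/-- The covariance `Cov(X,Y) = E[(X − E X)(Y − E Y)]` of two real random variables. -/
noncomputable def cov {Ω : Type*} [MeasurableSpace Ω] (X Y : Ω → ℝ) (P : Measure Ω) : ℝ :=
  ∫ ω, (X ω - ∫ ω', X ω' ∂P) * (Y ω - ∫ ω', Y ω' ∂P) ∂P

section CovAux

variable {Ω : Type*} [MeasurableSpace Ω] {P : Measure Ω} [IsProbabilityMeasure P]

lemma aux_integrable_mul {f g : Ω → ℝ} (hf : MemLp f 2 P) (hg : MemLp g 2 P) :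
    Integrable (fun ω => f ω * g ω) P := by
  have h : (1 : ℝ≥0∞) / 1 = 1 / 2 + 1 / 2 := by
    rw [ENNReal.add_halves]; norm_num
  have : MemLp (f • g) 1 P := hg.smul hf
  rw [memLp_one_iff_integrable] at this
  exact this

lemma cov_eq {f g : Ω → ℝ} (hf : MemLp f 2 P) (hg : MemLp g 2 P) :
    cov f g P = (∫ ω, f ω * g ω ∂P) - (∫ ω, f ω ∂P) * (∫ ω, g ω ∂P) := by
  have hfi := hf.integrable one_le_two
  have hgi := hg.integrable one_le_two
  have hfg := aux_integrable_mul hf hg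
  set a := ∫ ω, f ω ∂P with ha
  set b := ∫ ω, g ω ∂P with hb
  have key : ∀ ω, (f ω - a) * (g ω - b) = f ω * g ω - (a * g ω + b * f ω) + a * b := by
    intro ω; ring
  have h2 : Integrable (fun ω => a * g ω + b * f ω) P :=
    (hgi.const_mul a).add (hfi.const_mul b)
  have h1 : Integrable (fun ω => f ω * g ω - (a * g ω + b * f ω)) P := hfg.sub h2
  rw [cov]
  simp_rw [← ha, ← hb, key]
  rw [integral_add h1 (integrable_const _),
    integral_sub hfg h2,
    integral_add (hgi.const_mul a) (hfi.const_mul b),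
    integral_const_mul, integral_const_mul, integral_const]
  simp only [measure_univ, ENNReal.toReal_one, probReal_univ, smul_eq_mul, one_mul]
  ring

lemma cov_self {f : Ω → ℝ} (hf : MemLp f 2 P) : cov f f P = variance f P := by
  rw [cov_eq hf hf, variance_eq_sub hf]
  congr 1
  · simp [pow_two]
  · rw [pow_two]

lemma cov_comm (f g : Ω → ℝ) : cov f g P = cov g f P := by
  unfold cov; simp_rw [mul_comm]

lemma cov_add_left {f f' g : Ω → ℝ} (hf : MemLp f 2 P) (hf' : MemLp f' 2 P)
    (hg : MemLp g 2 P) :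
    cov (fun ω => f ω + f' ω) g P = cov f g P + cov f' g P := by
  have hsum : MemLp (fun ω => f ω + f' ω) 2 P := hf.add hf'
  rw [cov_eq hsum hg, cov_eq hf hg, cov_eq hf' hg]
  simp_rw [add_mul]
  rw [integral_add (aux_integrable_mul hf hg) (aux_integrable_mul hf' hg),
    integral_add (hf.integrable one_le_two) (hf'.integrable one_le_two)]
  ring

lemma cov_smul_left (c : ℝ) {f g : Ω → ℝ} (hf : MemLp f 2 P) (hg : MemLp g 2 P) :
    cov (fun ω => c * f ω) g P = c * cov f g P := by
  rw [cov_eq (hf.const_mul c) hg, cov_eq hf hg]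
  simp_rw [mul_assoc]
  rw [integral_const_mul, integral_const_mul]
  ring

lemma cov_smul_right (c : ℝ) {f g : Ω → ℝ} (hf : MemLp f 2 P) (hg : MemLp g 2 P) :
    cov f (fun ω => c * g ω) P = c * cov f g P := by
  rw [cov_comm, cov_smul_left c hg hf, cov_comm g f]

lemma cov_sub_left {f f' g : Ω → ℝ} (hf : MemLp f 2 P) (hf' : MemLp f' 2 P)
    (hg : MemLp g 2 P) :
    cov (fun ω => f ω - f' ω) g P = cov f g P - cov f' g P := by
  have h1 : cov (fun ω => (-1 : ℝ) * f' ω) g P = -cov f' g P := by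
    rw [cov_smul_left (-1) hf' hg]; ring
  have h2 : cov (fun ω => f ω + (-1 : ℝ) * f' ω) g P
      = cov f g P + cov (fun ω => (-1 : ℝ) * f' ω) g P :=
    cov_add_left hf (hf'.const_mul (-1)) hg
  have h3 : (fun ω => f ω - f' ω) = fun ω => f ω + (-1 : ℝ) * f' ω := by
    funext ω; ring
  rw [h3, h2, h1]; ring

lemma cov_sub_right {f g g' : Ω → ℝ} (hf : MemLp f 2 P) (hg : MemLp g 2 P)
    (hg' : MemLp g' 2 P) :
    cov f (fun ω => g ω - g' ω) P = cov f g P - cov f g' P := by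
  rw [cov_comm, cov_sub_left hg hg' hf, cov_comm g f, cov_comm g' f]

lemma cov_sum_left {ι : Type*} (s : Finset ι) {f : ι → Ω → ℝ} {g : Ω → ℝ}
    (hf : ∀ i, MemLp (f i) 2 P) (hg : MemLp g 2 P) :
    cov (fun ω => ∑ i ∈ s, f i ω) g P = ∑ i ∈ s, cov (f i) g P := by
  classical
  induction s using Finset.cons_induction with
  | empty =>
    have : cov (fun _ : Ω => (0 : ℝ)) g P = 0 := by
      rw [cov_eq (memLp_const 0) hg]; simp
    simpa using this
  | cons a s ha ih =>
    have hs : MemLp (fun ω => ∑ i ∈ s, f i ω) 2 P :=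
      memLp_finset_sum s (fun i _ => hf i)
    have h1 : cov (fun ω => f a ω + ∑ i ∈ s, f i ω) g P
        = cov (f a) g P + cov (fun ω => ∑ i ∈ s, f i ω) g P :=
      cov_add_left (hf a) hs hg
    simp_rw [Finset.sum_cons]
    rw [h1, ih]

lemma cov_sum_right {ι : Type*} (s : Finset ι) {f : Ω → ℝ} {g : ι → Ω → ℝ}
    (hf : MemLp f 2 P) (hg : ∀ i, MemLp (g i) 2 P) :
    cov f (fun ω => ∑ i ∈ s, g i ω) P = ∑ i ∈ s, cov f (g i) P := by
  rw [cov_comm, cov_sum_left s hg hf]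
  exact Finset.sum_congr rfl fun i _ => cov_comm _ _

lemma cov_indep_eq_zero {f g : Ω → ℝ} (hf : MemLp f 2 P) (hg : MemLp g 2 P)
    (h : IndepFun f g P) : cov f g P = 0 := by
  rw [cov_eq hf hg]
  have hmul : ∫ ω, f ω * g ω ∂P = (∫ ω, f ω ∂P) * ∫ ω, g ω ∂P :=
    h.integral_mul_eq_mul_integral (hf.integrable one_le_two).aestronglyMeasurable
      (hg.integrable one_le_two).aestronglyMeasurable
  rw [hmul, sub_self]

lemma cov_identDistrib {Ω' : Type*} [MeasurableSpace Ω'] {P' : Measure Ω'}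
    {f g : Ω → ℝ} {f' g' : Ω' → ℝ}
    (h : IdentDistrib (fun ω => (f ω, g ω)) (fun ω => (f' ω, g' ω)) P P') :
    cov f g P = cov f' g' P' := by
  have h1 : ∫ ω, f ω ∂P = ∫ ω, f' ω ∂P' := (h.comp measurable_fst).integral_eq
  have h2 : ∫ ω, g ω ∂P = ∫ ω, g' ω ∂P' := (h.comp measurable_snd).integral_eq
  have hu : Measurable (fun p : ℝ × ℝ =>
      (p.1 - ∫ ω, f' ω ∂P') * (p.2 - ∫ ω, g' ω ∂P')) := by
    exact ((measurable_fst.sub measurable_const).mul (measurable_snd.sub measurable_const))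
  have h3 := (h.comp hu).integral_eq
  rw [cov, cov, h1, h2]
  simpa [Function.comp] using h3

lemma variance_sub_smul {A B : Ω → ℝ} (hA : MemLp A 2 P) (hB : MemLp B 2 P) (α : ℝ) :
    variance (fun ω => A ω - α * B ω) P
      = cov A A P - 2 * α * cov A B P + α ^ 2 * cov B B P := by
  have hαB : MemLp (fun ω => α * B ω) 2 P := hB.const_mul α
  have hM : MemLp (fun ω => A ω - α * B ω) 2 P := hA.sub hαB
  rw [← cov_self hM]
  rw [cov_sub_left hA hαB hM,
    cov_sub_right hA hA hαB,
    cov_sub_right hαB hA hαB,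
    cov_smul_right α hA hB,
    cov_smul_left α hB hA,
    cov_smul_left α hB (hB.const_mul α),
    cov_smul_right α hB hB,
    cov_comm B A]
  ring

end CovAux

/-- Bi-fidelity control-variate estimator with estimated control-variate mean
(Appendix B of the paper): with `N_h` i.i.d. pairs `(X_i, Y_i)` distributed as `(X, Y)`
and `N_l` i.i.d. copies `Y'_j` of `Y`, independent of the pairs, the variance of
`M(α) = (1/N_h) Σ X_i − α((1/N_h) Σ Y_i − (1/N_l) Σ Y'_j)` is minimized at
`α* = (Cov(X,Y)/Var(Y))·1/(1 + N_h/N_l)`, where it equals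
`(1/N_h)(1 − ρ²/(1 + N_h/N_l))·Var(X)`. -/
theorem bifidelity_control_variate_variance
    {Ω : Type*} [MeasurableSpace Ω] (P : Measure Ω) [IsProbabilityMeasure P]
    (X Y : Ω → ℝ) (hX : MemLp X 2 P) (hY : MemLp Y 2 P)
    (hVX : 0 < variance X P) (hVY : 0 < variance Y P)
    (ρ : ℝ) (hρ : ρ = cov X Y P / Real.sqrt (variance X P * variance Y P))
    (Nh Nl : ℕ) (hNh : 1 ≤ Nh) (hNl : 1 ≤ Nl)
    (XY : Fin Nh → Ω → ℝ × ℝ) (Y' : Fin Nl → Ω → ℝ)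
    (hXYindep : iIndepFun XY P)
    (hXYident : ∀ i, IdentDistrib (XY i) (fun ω => (X ω, Y ω)) P P)
    (hY'indep : iIndepFun Y' P)
    (hY'ident : ∀ j, IdentDistrib (Y' j) Y P P)
    (hcross : IndepFun (fun ω i => XY i ω) (fun ω j => Y' j ω) P)
    (M : ℝ → Ω → ℝ)
    (hM : ∀ α ω, M α ω
      = (1 / Nh : ℝ) * ∑ i, (XY i ω).1
        - α * ((1 / Nh : ℝ) * ∑ i, (XY i ω).2 - (1 / Nl : ℝ) * ∑ j, Y' j ω))
    (αstar : ℝ)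
    (hαstar : αstar = (cov X Y P / variance Y P) * (1 / (1 + (Nh : ℝ) / Nl))) :
    (∀ α : ℝ, variance (M αstar) P ≤ variance (M α) P) ∧
    variance (M αstar) P
      = (1 / Nh : ℝ) * (1 - ρ ^ 2 / (1 + (Nh : ℝ) / Nl)) * variance X P := by
  classical
  set C : ℝ := cov X Y P with hC
  set VX : ℝ := variance X P with hVXdef
  set VY : ℝ := variance Y P with hVYdef
  have hnh : (0 : ℝ) < Nh := by exact_mod_cast hNh
  have hnl : (0 : ℝ) < Nl := by exact_mod_cast hNl
  -- components
  set Xc : Fin Nh → Ω → ℝ := fun i ω => (XY i ω).1 with hXcdef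
  set Yc : Fin Nh → Ω → ℝ := fun i ω => (XY i ω).2 with hYcdef
  have hXid : ∀ i, IdentDistrib (Xc i) X P P := fun i => (hXYident i).comp measurable_fst
  have hYid : ∀ i, IdentDistrib (Yc i) Y P P := fun i => (hXYident i).comp measurable_snd
  have hXm : ∀ i, MemLp (Xc i) 2 P := fun i => (hXid i).symm.memLp_snd hX
  have hYm : ∀ i, MemLp (Yc i) 2 P := fun i => (hYid i).symm.memLp_snd hY
  have hY'm : ∀ j, MemLp (Y' j) 2 P := fun j => (hY'ident j).symm.memLp_snd hY
  -- aggregates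
  set Sx : Ω → ℝ := fun ω => (1 / Nh : ℝ) * ∑ i, Xc i ω with hSxdef
  set Sy : Ω → ℝ := fun ω => (1 / Nh : ℝ) * ∑ i, Yc i ω with hSydef
  set Sy' : Ω → ℝ := fun ω => (1 / Nl : ℝ) * ∑ j, Y' j ω with hSy'def
  have hSxm : MemLp Sx 2 P :=
    (memLp_finset_sum Finset.univ (fun i _ => hXm i)).const_mul _
  have hSym : MemLp Sy 2 P :=
    (memLp_finset_sum Finset.univ (fun i _ => hYm i)).const_mul _
  have hSy'm : MemLp Sy' 2 P :=
    (memLp_finset_sum Finset.univ (fun j _ => hY'm j)).const_mul _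
  set B : Ω → ℝ := fun ω => Sy ω - Sy' ω with hBdef
  have hBm : MemLp B 2 P := hSym.sub hSy'm
  -- diagonal covariances
  have hcovXX : ∀ i, cov (Xc i) (Xc i) P = VX := fun i => by
    rw [cov_self (hXm i), (hXid i).variance_eq]
  have hcovYY : ∀ i, cov (Yc i) (Yc i) P = VY := fun i => by
    rw [cov_self (hYm i), (hYid i).variance_eq]
  have hcovY'Y' : ∀ j, cov (Y' j) (Y' j) P = VY := fun j => by
    rw [cov_self (hY'm j), (hY'ident j).variance_eq]
  have hcovXY : ∀ i, cov (Xc i) (Yc i) P = C := fun i => by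
    refine cov_identDistrib ?_
    have : (fun ω => (Xc i ω, Yc i ω)) = XY i := by
      funext ω; simp [hXcdef, hYcdef]
    rw [this]; exact hXYident i
  -- off-diagonal independence within the pairs
  have hXXindep : ∀ i j, i ≠ j → IndepFun (Xc i) (Xc j) P := fun i j hij =>
    (hXYindep.indepFun hij).comp measurable_fst measurable_fst
  have hYYindep : ∀ i j, i ≠ j → IndepFun (Yc i) (Yc j) P := fun i j hij =>
    (hXYindep.indepFun hij).comp measurable_snd measurable_snd
  have hXYoff : ∀ i j, i ≠ j → IndepFun (Xc i) (Yc j) P := fun i j hij =>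
    (hXYindep.indepFun hij).comp measurable_fst measurable_snd
  -- double-sum covariance computations
  have sum_diag : ∀ (f : Fin Nh → Ω → ℝ) (g : Fin Nh → Ω → ℝ)
      (hf : ∀ i, MemLp (f i) 2 P) (hg : ∀ i, MemLp (g i) 2 P)
      (d : ℝ) (hd : ∀ i, cov (f i) (g i) P = d)
      (hoff : ∀ i j, i ≠ j → cov (f i) (g j) P = 0),
      cov (fun ω => ∑ i, f i ω) (fun ω => ∑ j, g j ω) P = Nh * d := by
    intro f g hf hg d hd hoff
    rw [cov_sum_left Finset.univ hf ((memLp_finset_sum Finset.univ (fun i _ => hg i)))]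
    have : ∀ i : Fin Nh, cov (f i) (fun ω => ∑ j, g j ω) P = d := by
      intro i
      rw [cov_sum_right Finset.univ (hf i) hg]
      rw [Finset.sum_eq_single i (fun j _ hji => hoff i j (Ne.symm hji))
        (fun h => absurd (Finset.mem_univ i) h)]
      exact hd i
    simp_rw [this]
    simp [Finset.card_univ, mul_comm]
  have cSxSx : cov Sx Sx P = VX / Nh := by
    rw [hSxdef]
    rw [cov_smul_left _ (memLp_finset_sum Finset.univ (fun i _ => hXm i)) hSxm]
    rw [cov_smul_right _ (memLp_finset_sum Finset.univ (fun i _ => hXm i))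
      (memLp_finset_sum Finset.univ (fun i _ => hXm i))]
    rw [sum_diag Xc Xc hXm hXm VX hcovXX
      (fun i j hij => cov_indep_eq_zero (hXm i) (hXm j) (hXXindep i j hij))]
    field_simp <;> ring
  have cSySy : cov Sy Sy P = VY / Nh := by
    rw [hSydef]
    rw [cov_smul_left _ (memLp_finset_sum Finset.univ (fun i _ => hYm i)) hSym]
    rw [cov_smul_right _ (memLp_finset_sum Finset.univ (fun i _ => hYm i))
      (memLp_finset_sum Finset.univ (fun i _ => hYm i))]
    rw [sum_diag Yc Yc hYm hYm VY hcovYY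
      (fun i j hij => cov_indep_eq_zero (hYm i) (hYm j) (hYYindep i j hij))]
    field_simp <;> ring
  have cSxSy : cov Sx Sy P = C / Nh := by
    rw [hSxdef, hSydef]
    rw [cov_smul_left _ (memLp_finset_sum Finset.univ (fun i _ => hXm i)) hSym]
    rw [cov_smul_right _ (memLp_finset_sum Finset.univ (fun i _ => hXm i))
      (memLp_finset_sum Finset.univ (fun i _ => hYm i))]
    rw [sum_diag Xc Yc hXm hYm C hcovXY
      (fun i j hij => cov_indep_eq_zero (hXm i) (hYm j) (hXYoff i j hij))]
    field_simp <;> ring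
  -- Var of Sy'
  have sum_diag' : cov (fun ω => ∑ j, Y' j ω) (fun ω => ∑ j, Y' j ω) P = Nl * VY := by
    rw [cov_sum_left Finset.univ hY'm (memLp_finset_sum Finset.univ (fun j _ => hY'm j))]
    have : ∀ j : Fin Nl, cov (Y' j) (fun ω => ∑ k, Y' k ω) P = VY := by
      intro j
      rw [cov_sum_right Finset.univ (hY'm j) hY'm]
      rw [Finset.sum_eq_single j
        (fun k _ hkj => cov_indep_eq_zero (hY'm j) (hY'm k) (hY'indep.indepFun (Ne.symm hkj)))
        (fun h => absurd (Finset.mem_univ j) h)]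
      exact hcovY'Y' j
    simp_rw [this]
    simp [Finset.card_univ, mul_comm]
  have cSy'Sy' : cov Sy' Sy' P = VY / Nl := by
    rw [hSy'def]
    rw [cov_smul_left _ (memLp_finset_sum Finset.univ (fun j _ => hY'm j)) hSy'm]
    rw [cov_smul_right _ (memLp_finset_sum Finset.univ (fun j _ => hY'm j))
      (memLp_finset_sum Finset.univ (fun j _ => hY'm j))]
    rw [sum_diag']
    field_simp <;> ring
  -- cross independence
  have hu : Measurable (fun v : Fin Nh → ℝ × ℝ => (1 / Nh : ℝ) * ∑ i, (v i).1) := by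
    apply Measurable.const_mul
    exact Finset.measurable_sum _ (fun i _ => (measurable_pi_apply i).fst)
  have hu' : Measurable (fun v : Fin Nh → ℝ × ℝ => (1 / Nh : ℝ) * ∑ i, (v i).2) := by
    apply Measurable.const_mul
    exact Finset.measurable_sum _ (fun i _ => (measurable_pi_apply i).snd)
  have hw : Measurable (fun v : Fin Nl → ℝ => (1 / Nl : ℝ) * ∑ j, v j) := by
    apply Measurable.const_mul
    exact Finset.measurable_sum _ (fun j _ => measurable_pi_apply j)
  have hSxSy'indep : IndepFun Sx Sy' P := hcross.comp hu hw
  have hSySy'indep : IndepFun Sy Sy' P := hcross.comp hu' hw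
  have cSxSy' : cov Sx Sy' P = 0 := cov_indep_eq_zero hSxm hSy'm hSxSy'indep
  have cSySy'0 : cov Sy Sy' P = 0 := cov_indep_eq_zero hSym hSy'm hSySy'indep
  -- covariances with B
  have cSxB : cov Sx B P = C / Nh := by
    rw [hBdef, cov_sub_right hSxm hSym hSy'm, cSxSy, cSxSy']
    ring
  have cBB : cov B B P = VY / Nh + VY / Nl := by
    rw [hBdef, cov_sub_left hSym hSy'm hBm, cov_sub_right hSym hSym hSy'm,
      cov_sub_right hSy'm hSym hSy'm, cSySy, cSy'Sy', cSySy'0, cov_comm Sy' Sy, cSySy'0]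
    ring
  -- variance of M α
  have hMvar : ∀ α : ℝ, variance (M α) P
      = VX / Nh - 2 * α * (C / Nh) + α ^ 2 * (VY / Nh + VY / Nl) := by
    intro α
    have hMeq : M α = fun ω => Sx ω - α * B ω := by
      funext ω
      rw [hM α ω]
    rw [hMeq, variance_sub_smul hSxm hBm, cSxSx, cSxB, cBB]
  -- key relation: cov Sx B = cov B B * αstar
  have hVYne : VY ≠ 0 := ne_of_gt hVY
  have hVXne : VX ≠ 0 := ne_of_gt hVX
  have hden : (1 : ℝ) + (Nh : ℝ) / Nl ≠ 0 := by positivity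
  have hkey : C / Nh = (VY / Nh + VY / Nl) * αstar := by
    rw [hαstar]
    field_simp <;> ring
  have hcBnonneg : (0 : ℝ) ≤ VY / Nh + VY / Nl := by positivity
  constructor
  · intro α
    rw [hMvar α, hMvar αstar, hkey]
    nlinarith [mul_nonneg hcBnonneg (sq_nonneg (α - αstar))]
  · have hρ2 : ρ ^ 2 = C ^ 2 / (VX * VY) := by
      rw [hρ, div_pow, Real.sq_sqrt (by positivity)]
    rw [hMvar αstar, hρ2, hαstar]
    field_simp <;> ring
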